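/- arXiv:1005.4252 — 2 statements merged into one kernel-verified Lean document; each statement's English description precedes it below -/
import Mathlib

section
/- Fix positive integers n and p, and let e_k denote the k-th elementary symmetric polynomial in nonzero complex variables z_1,...,z_n (with e_k = 0 for k outside {0,...,n}). Then ∑_{k=0}^{n} [ C(2p-1,p) e_k(z)^2 + ∑_{j=1}^{p} (-1)^j C(2p,p-j) e_{k+j}(z) e_{k-j}(z) ] = e_n(z) * ∑_{k=0}^{⌊n/2⌋} (S(p,k)/2) e_{n-2k}(z_1 + 1/z_1, ..., z_n + 1/z_n), where S(p,k) = C(2p,p)C(2k,k)/C(p+k,p). -/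
/-- The `k`-th elementary symmetric function of `z 0, …, z (n-1)`; it vanishes for `k > n`
and `esym n z 0 = 1`. -/
noncomputable def esym (n : ℕ) (z : Fin n → ℂ) (k : ℕ) : ℂ :=
  ∑ s ∈ Finset.powersetCard k (Finset.univ : Finset (Fin n)), ∏ i ∈ s, z i

/-- Elementary symmetric function with integer index: `0` for negative index. -/
noncomputable def esymZ (n : ℕ) (z : Fin n → ℂ) (k : ℤ) : ℂ :=
  if 0 ≤ k then esym n z k.toNat else 0

/-- The super Catalan number `S(p,k)` as a rational number. -/
def superCatalan (p k : ℕ) : ℚ :=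
  (((2 * p).choose p : ℚ) * ((2 * k).choose k : ℚ)) / ((p + k).choose p : ℚ)

/-!
Put `E(X) = ∏ (1 + z_i X)` and `F(X) = ∏ (X + z_i) = X^n E(1/X)`. The coefficient of `X^(n+2j)`
in `E F` is `∑_k e_{k+j} e_{k-j}`, so the left-hand side is a fixed linear form `L` applied to
these coefficients. On the other hand `(1 + z X)(X + z) = z ((1 + X²) + (z + 1/z) X)`, hence
`E F = e_n ∑_s e_s(w) X^s (1 + X²)^(n-s)` with `w_i = z_i + 1/z_i`, and `L` applied to the
coefficients of `(1 + X²)^(2k)` is `S(p,k)/2` (odd powers contribute nothing). This is von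
Szily's formula `S(p,k) = (-1)^k [X^(p+k)] (1 + X)^(2p) (1 - X)^(2k)` folded in half by the
symmetry `j ↦ -j` of its terms; the formula itself follows from the recurrence
`S(p+1,k) = 4 S(p,k) - S(p,k+1)`.
-/

open Polynomial Finset

theorem Finset.sum_range_eq_add_sum_Icc_sub_add_sum_Icc_add {M : Type*} [AddCommMonoid M]
    (f : ℕ → M) (p k : ℕ) :
    ∑ a ∈ range (p + k + 1), f a =
      f p + ∑ j ∈ Icc 1 p, f (p - j) + ∑ j ∈ Icc 1 k, f (p + j) := by
  rw [add_right_comm, sum_range_add, sum_range_succ, add_comm (∑ a ∈ range p, f a)]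
  congr 1
  · congr 1
    refine sum_nbij' (p - ·) (p - ·) ?_ ?_ ?_ ?_ ?_ <;> intro a ha <;>
      simp only [mem_Icc, mem_range] at ha ⊢ <;> first | omega | (congr 1; omega)
  · refine sum_nbij' (· + 1) (· - 1) ?_ ?_ ?_ ?_ ?_ <;> intro a ha <;>
      simp only [mem_Icc, mem_range] at ha ⊢ <;> first | omega | (congr 1; omega)

theorem Finset.sum_range_ite_even_sub {M : Type*} [AddCommMonoid M] (g : ℕ → ℕ → M)
    (n : ℕ) :
    ∑ s ∈ range (n + 1), (if Even (n - s) then g s ((n - s) / 2) else 0) =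
      ∑ k ∈ range (n / 2 + 1), g (n - 2 * k) k := by
  rw [← sum_filter]
  refine sum_nbij' (fun s => (n - s) / 2) (fun k => n - 2 * k) ?_ ?_ ?_ ?_ ?_ <;> intro a ha <;>
    simp only [mem_filter, mem_range, Nat.even_iff] at ha ⊢ <;> first | omega | (congr 1; omega)

theorem Nat.two_mul_choose_two_mul_sub_one {p : ℕ} (hp : 0 < p) :
    2 * (2 * p - 1).choose p = (2 * p).choose p := by
  obtain ⟨q, rfl⟩ : ∃ q, p = q + 1 := ⟨p - 1, by omega⟩
  rw [show 2 * (q + 1) - 1 = 2 * q + 1 by omega, show 2 * (q + 1) = 2 * q + 1 + 1 by ring,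
    Nat.choose_symm_half, Nat.choose_succ_succ', Nat.choose_symm_half]
  ring

theorem Polynomial.coeff_one_sub_X_pow {R : Type*} [CommRing R] (m j : ℕ) :
    ((1 - X : R[X]) ^ m).coeff j = (-1) ^ j * m.choose j := by
  rw [sub_eq_add_neg, add_comm, add_pow, finsetSum_coeff]
  simp only [one_pow, mul_one, neg_pow (X : R[X]), ← C_1, ← C_neg, ← C_pow, ← C_eq_natCast,
    mul_right_comm _ (X ^ _ : R[X]), ← C_mul, coeff_C_mul_X_pow]
  rw [sum_ite_eq]
  split_ifs with h
  · rfl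
  · rw [Nat.choose_eq_zero_of_lt (by simpa using h)]
    simp

theorem Polynomial.coeff_one_add_X_sq_pow {R : Type*} [CommSemiring R] (m i : ℕ) :
    ((1 + X ^ 2 : R[X]) ^ m).coeff i = if Even i then (m.choose (i / 2) : R) else 0 := by
  rw [← expand_X (R := R) (p := 2), ← map_one (expand R 2), ← map_add, ← map_pow,
    coeff_expand two_pos, coeff_one_add_X_pow]
  simp only [even_iff_two_dvd]

section Binomial

variable {R : Type*} [CommRing R]

theorem sum_Icc_choose_sub_mul_choose_add (p k : ℕ) :
    ∑ j ∈ Icc 1 p, (-1 : R) ^ j * (2 * p).choose (p - j) * (2 * k).choose (k + j) =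
      ∑ j ∈ Icc 1 (p + k), (-1 : R) ^ j * (2 * p).choose (p + j) * (2 * k).choose (k + j) := by
  refine sum_subset_zero_on_sdiff (Icc_subset_Icc_right (Nat.le_add_right p k)) ?_ ?_
  · intro j hj
    rw [mem_sdiff, mem_Icc, mem_Icc] at hj
    rw [Nat.choose_eq_zero_of_lt (by omega : 2 * p < p + j)]
    simp
  · intro j hj
    rw [mem_Icc] at hj
    rw [Nat.choose_symm_of_eq_add (by omega : 2 * p = (p - j) + (p + j))]

theorem neg_one_pow_mul_coeff_one_add_X_pow_mul_one_sub_X_pow (p k : ℕ) :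
    (-1) ^ k * ((1 + X : R[X]) ^ (2 * p) * (1 - X) ^ (2 * k)).coeff (p + k) =
      (2 * p).choose p * (2 * k).choose k +
        2 * ∑ j ∈ Icc 1 p, (-1 : R) ^ j * (2 * p).choose (p - j) * (2 * k).choose (k + j) := by
  rw [coeff_mul, Nat.sum_antidiagonal_eq_sum_range_succ_mk,
    sum_range_eq_add_sum_Icc_sub_add_sum_Icc_add]
  simp only [coeff_one_add_X_pow, coeff_one_sub_X_pow]
  have sq (m : ℕ) : (-1 : R) ^ m * (-1) ^ m = 1 := by
    rw [← mul_pow, neg_one_mul, neg_neg, one_pow]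
  have low : ∑ j ∈ Icc 1 p, (-1 : R) ^ k *
      ((2 * p).choose (p - j) * ((-1) ^ (p + k - (p - j)) * (2 * k).choose (p + k - (p - j)))) =
        ∑ j ∈ Icc 1 p, (-1 : R) ^ j * (2 * p).choose (p - j) * (2 * k).choose (k + j) := by
    refine sum_congr rfl fun j hj => ?_
    rw [mem_Icc] at hj
    rw [show p + k - (p - j) = k + j by omega, pow_add]
    linear_combination ((-1 : R) ^ j * (2 * p).choose (p - j) * (2 * k).choose (k + j)) * sq k
  have up : ∑ j ∈ Icc 1 k, (-1 : R) ^ k *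
      ((2 * p).choose (p + j) * ((-1) ^ (p + k - (p + j)) * (2 * k).choose (p + k - (p + j)))) =
        ∑ j ∈ Icc 1 k, (-1 : R) ^ j * (2 * k).choose (k - j) * (2 * p).choose (p + j) := by
    refine sum_congr rfl fun j hj => ?_
    rw [mem_Icc] at hj
    rw [show p + k - (p + j) = k - j by omega,
      show (-1 : R) ^ k = (-1) ^ (k - j) * (-1) ^ j by rw [← pow_add, Nat.sub_add_cancel hj.2]]
    linear_combination
      ((-1 : R) ^ j * (2 * k).choose (k - j) * (2 * p).choose (p + j)) * sq (k - j)
  rw [mul_add, mul_add, mul_sum, mul_sum, low, up, sum_Icc_choose_sub_mul_choose_add,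
    sum_Icc_choose_sub_mul_choose_add k, add_comm k p, Nat.add_sub_cancel_left]
  simp only [mul_right_comm _ ((2 * k).choose _ : R)]
  linear_combination ((2 * p).choose p * (2 * k).choose k : R) * sq k

end Binomial

theorem superCatalan_zero_left (k : ℕ) : superCatalan 0 k = (2 * k).choose k := by
  simp [superCatalan]

theorem superCatalan_eq_factorial (p k : ℕ) :
    superCatalan p k =
      (2 * p).factorial * (2 * k).factorial / (p.factorial * k.factorial * (p + k).factorial) := by
  rw [superCatalan, Nat.cast_choose ℚ (by omega : p ≤ 2 * p),
    Nat.cast_choose ℚ (by omega : k ≤ 2 * k), Nat.cast_choose ℚ (Nat.le_add_right p k),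
    two_mul, two_mul, Nat.add_sub_cancel, Nat.add_sub_cancel, Nat.add_sub_cancel_left]
  field_simp

theorem superCatalan_succ_left (p k : ℕ) :
    superCatalan (p + 1) k = 4 * superCatalan p k - superCatalan p (k + 1) := by
  simp only [superCatalan_eq_factorial, show 2 * (p + 1) = 2 * p + 1 + 1 by ring,
    show 2 * (k + 1) = 2 * k + 1 + 1 by ring, show p + 1 + k = p + k + 1 by ring,
    show p + (k + 1) = p + k + 1 by ring, Nat.factorial_succ]
  push_cast
  field_simp
  ring

-- The weights of the paper's operators `L_k^p`.
@[simps]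
noncomputable def lkpForm (K : Type*) [CommRing K] (p : ℕ) : (ℕ → K) →ₗ[K] K where
  toFun x := (2 * p - 1).choose p * x 0 + ∑ j ∈ Icc 1 p, (-1) ^ j * (2 * p).choose (p - j) * x j
  map_add' x y := by
    simp only [Pi.add_apply, mul_add, sum_add_distrib]
    ring
  map_smul' c x := by
    simp only [Pi.smul_apply, smul_eq_mul, RingHom.id_apply, mul_add, mul_sum]
    ring_nf

section Field

variable {K : Type*} [Field K] [CharZero K]

theorem superCatalan_eq_neg_one_pow_mul_coeff (p k : ℕ) :
    (superCatalan p k : K) =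
      (-1) ^ k * ((1 + X : K[X]) ^ (2 * p) * (1 - X) ^ (2 * k)).coeff (p + k) := by
  induction p generalizing k with
  | zero =>
    rw [superCatalan_zero_left, pow_zero, one_mul, zero_add, coeff_one_sub_X_pow, ← mul_assoc,
      ← mul_pow, neg_one_mul, neg_neg, one_pow, one_mul, Rat.cast_natCast]
  | succ p ih =>
    have h : (1 + X : K[X]) ^ (2 * (p + 1)) * (1 - X) ^ (2 * k) =
        (1 + X) ^ (2 * p) * (1 - X) ^ (2 * (k + 1)) +
          4 * (X * ((1 + X) ^ (2 * p) * (1 - X) ^ (2 * k))) := by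
      ring
    rw [superCatalan_succ_left, Rat.cast_sub, Rat.cast_mul, ih, ih, h,
      show p + 1 + k = p + (k + 1) by ring, coeff_add, show p + (k + 1) = p + k + 1 by ring,
      coeff_ofNat_mul, coeff_X_mul, pow_succ]
    ring

theorem lkpForm_choose_add {p : ℕ} (hp : 0 < p) (k : ℕ) :
    lkpForm K p (fun j => ((2 * k).choose (k + j) : K)) = ((superCatalan p k / 2 : ℚ) : K) := by
  rw [lkpForm_apply, Rat.cast_div, Rat.cast_ofNat, superCatalan_eq_neg_one_pow_mul_coeff,
    neg_one_pow_mul_coeff_one_add_X_pow_mul_one_sub_X_pow,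
    ← Nat.two_mul_choose_two_mul_sub_one hp, add_zero]
  push_cast
  ring

theorem lkpForm_coeff_one_add_X_sq_pow {p : ℕ} (hp : 0 < p) (m : ℕ) :
    lkpForm K p (fun j => ((1 + X ^ 2 : K[X]) ^ m).coeff (m + 2 * j)) =
      if Even m then ((superCatalan p (m / 2) / 2 : ℚ) : K) else 0 := by
  simp only [coeff_one_add_X_sq_pow, Nat.even_add, even_two_mul, iff_true]
  obtain ⟨k, rfl | rfl⟩ := Nat.even_or_odd' m
  · simp only [even_two_mul, if_true, Nat.mul_div_cancel_left k two_pos,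
      show ∀ j, (2 * k + 2 * j) / 2 = k + j by omega]
    exact lkpForm_choose_add hp k
  · simp only [Nat.not_even_two_mul_add_one, if_false]
    exact map_zero _

end Field

section Esym

variable {n : ℕ}

theorem esym_eq_zero_of_lt (z : Fin n → ℂ) {k : ℕ} (h : n < k) : esym n z k = 0 := by
  rw [esym, powersetCard_eq_empty.2 (by simpa using h), sum_empty]

theorem esym_self (z : Fin n → ℂ) : esym n z n = ∏ i, z i := by
  have h : powersetCard n (univ : Finset (Fin n)) = {univ} := by
    simpa using powersetCard_self (univ : Finset (Fin n))
  rw [esym, h, sum_singleton]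

theorem esymZ_natCast (z : Fin n → ℂ) (k : ℕ) : esymZ n z k = esym n z k := by
  simp [esymZ]

theorem esymZ_of_neg (z : Fin n → ℂ) {k : ℤ} (h : k < 0) : esymZ n z k = 0 :=
  if_neg (not_le.2 h)

theorem prod_algebraMap_mul_add_eq_sum_esym {S : Type*} [CommSemiring S] [Algebra ℂ S]
    (w : Fin n → ℂ) (a b : S) :
    ∏ i, (algebraMap ℂ S (w i) * a + b) =
      ∑ s ∈ range (n + 1), algebraMap ℂ S (esym n w s) * a ^ s * b ^ (n - s) := by
  rw [prod_add, sum_powerset, card_univ, Fintype.card_fin]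
  refine sum_congr rfl fun s _ => ?_
  rw [esym, map_sum, sum_mul, sum_mul]
  refine sum_congr rfl fun t ht => ?_
  obtain ⟨-, hts⟩ := mem_powersetCard.1 ht
  rw [prod_mul_distrib, prod_const, prod_const, ← map_prod, card_univ_sdiff, hts,
    Fintype.card_fin]

theorem coeff_prod_C_mul_X_add_one (z : Fin n → ℂ) (k : ℕ) :
    (∏ i, (C (z i) * X + 1)).coeff k = esym n z k := by
  have := prod_algebraMap_mul_add_eq_sum_esym z (X : ℂ[X]) 1
  simp only [algebraMap_eq, one_pow, mul_one] at this
  rw [this, finsetSum_coeff]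
  simp only [coeff_C_mul_X_pow]
  rw [sum_ite_eq]
  split_ifs with h
  · rfl
  · exact (esym_eq_zero_of_lt z (by simpa using h)).symm

theorem coeff_prod_X_add_C (z : Fin n → ℂ) (b : ℕ) :
    (∏ i, (X + C (z i))).coeff b = esymZ n z (n - b) := by
  rcases le_or_gt b n with hb | hb
  · rw [prod_X_add_C_coeff _ _ (by simpa using hb), ← Nat.cast_sub hb, esymZ_natCast, esym,
      card_univ, Fintype.card_fin]
  · rw [esymZ_of_neg z (by omega), coeff_eq_zero_of_natDegree_lt]
    simpa [natDegree_prod _ _ fun i _ => X_add_C_ne_zero (z i)] using hb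

noncomputable def corrPoly (z : Fin n → ℂ) : ℂ[X] :=
  (∏ i, (C (z i) * X + 1)) * ∏ i, (X + C (z i))

theorem coeff_corrPoly_add_two_mul (z : Fin n → ℂ) (j : ℕ) :
    (corrPoly z).coeff (n + 2 * j) =
      ∑ k ∈ range (n + 1), esym n z (k + j) * esymZ n z ((k : ℤ) - j) := by
  rw [corrPoly, coeff_mul, Nat.sum_antidiagonal_eq_sum_range_succ_mk]
  simp only [coeff_prod_C_mul_X_add_one, coeff_prod_X_add_C]
  rw [Nat.succ_eq_add_one, show n + 2 * j + 1 = j + (n + 1 + j) by ring, sum_range_add,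
    sum_range_add]
  have low : ∑ a ∈ range j, esym n z a * esymZ n z ((n : ℤ) - ↑(n + 2 * j - a)) = 0 :=
    sum_eq_zero fun a ha => by
      rw [mem_range] at ha
      rw [esymZ_of_neg z (by omega), mul_zero]
  have high : ∑ a ∈ range j, esym n z (j + (n + 1 + a)) *
      esymZ n z ((n : ℤ) - ↑(n + 2 * j - (j + (n + 1 + a)))) = 0 :=
    sum_eq_zero fun a _ => by rw [esym_eq_zero_of_lt z (by omega), zero_mul]
  rw [low, high, zero_add, add_zero]
  refine sum_congr rfl fun k hk => ?_
  rw [mem_range] at hk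
  rw [add_comm j k]
  congr 2
  omega

theorem corrPoly_eq (z : Fin n → ℂ) (hz : ∀ i, z i ≠ 0) :
    corrPoly z = C (esym n z n) * ∏ i, (C (z i + (z i)⁻¹) * X + (1 + X ^ 2)) := by
  rw [corrPoly, esym_self, map_prod, ← prod_mul_distrib, ← prod_mul_distrib]
  refine prod_congr rfl fun i _ => ?_
  have h : C (z i) * C (z i)⁻¹ = 1 := by rw [← map_mul, mul_inv_cancel₀ (hz i), map_one]
  rw [map_add]
  linear_combination (-X : ℂ[X]) * h

theorem coeff_corrPoly_eq_sum (z : Fin n → ℂ) (hz : ∀ i, z i ≠ 0) (j : ℕ) :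
    (corrPoly z).coeff (n + 2 * j) =
      esym n z n * ∑ s ∈ range (n + 1), esym n (fun i => z i + (z i)⁻¹) s *
        ((1 + X ^ 2 : ℂ[X]) ^ (n - s)).coeff (n - s + 2 * j) := by
  have := prod_algebraMap_mul_add_eq_sum_esym (fun i => z i + (z i)⁻¹) (X : ℂ[X]) (1 + X ^ 2)
  simp only [algebraMap_eq] at this
  rw [corrPoly_eq z hz, coeff_C_mul, this, finsetSum_coeff]
  refine congrArg _ (sum_congr rfl fun s hs => ?_)
  rw [mem_range] at hs
  rw [mul_assoc, coeff_C_mul, show n + 2 * j = n - s + 2 * j + s by omega, coeff_X_pow_mul]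

theorem lkpForm_coeff_corrPoly {p : ℕ} (hp : 0 < p) (z : Fin n → ℂ) (hz : ∀ i, z i ≠ 0) :
    lkpForm ℂ p (fun j => (corrPoly z).coeff (n + 2 * j)) =
      esym n z n * ∑ s ∈ range (n + 1), esym n (fun i => z i + (z i)⁻¹) s *
        if Even (n - s) then ((superCatalan p ((n - s) / 2) / 2 : ℚ) : ℂ) else 0 := by
  have h : (fun j => (corrPoly z).coeff (n + 2 * j)) =
      esym n z n • ∑ s ∈ range (n + 1), esym n (fun i => z i + (z i)⁻¹) s •
        fun j => ((1 + X ^ 2 : ℂ[X]) ^ (n - s)).coeff (n - s + 2 * j) := by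
    funext j
    simp only [coeff_corrPoly_eq_sum z hz, Pi.smul_apply, Finset.sum_apply, smul_eq_mul]
  simp only [h, map_smul, map_sum, lkpForm_coeff_one_add_X_sq_pow hp, smul_eq_mul]

end Esym

theorem esym_Lkp_identity_general (n p : ℕ) (hp : 0 < p) (z : Fin n → ℂ)
    (hz : ∀ i, z i ≠ 0) :
    ∑ k ∈ Finset.range (n + 1),
        (((2 * p - 1).choose p : ℂ) * (esym n z k) ^ 2 +
          ∑ j ∈ Finset.Icc 1 p,
            (-1 : ℂ) ^ j * ((2 * p).choose (p - j) : ℂ) *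
              esym n z (k + j) * esymZ n z ((k : ℤ) - j)) =
      esym n z n *
        ∑ k ∈ Finset.range (n / 2 + 1),
          ((superCatalan p k / 2 : ℚ) : ℂ) *
            esym n (fun i => z i + (z i)⁻¹) (n - 2 * k) := by
  set w : Fin n → ℂ := fun i => z i + (z i)⁻¹
  calc _ = ∑ k ∈ range (n + 1),
          lkpForm ℂ p (fun j => esym n z (k + j) * esymZ n z (k - j)) := by
        simp only [lkpForm_apply, add_zero, CharP.cast_eq_zero, sub_zero, esymZ_natCast, sq,
          mul_assoc]
    _ = lkpForm ℂ p (fun j => (corrPoly z).coeff (n + 2 * j)) := by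
        simp only [coeff_corrPoly_add_two_mul, ← map_sum, sum_fn]
    _ = esym n z n * ∑ s ∈ range (n + 1), esym n w s *
          if Even (n - s) then ((superCatalan p ((n - s) / 2) / 2 : ℚ) : ℂ) else 0 :=
        lkpForm_coeff_corrPoly hp z hz
    _ = _ := by
        simp only [mul_ite, mul_zero]
        rw [sum_range_ite_even_sub (fun s k => esym n w s * ((superCatalan p k / 2 : ℚ) : ℂ))]
        simp only [mul_comm (esym n w _)]

/-- Lemma 2.7 (`Q^p`): the symmetric function identity for the operators `L_k^p`. -/
theorem esym_Lkp_identity (n p : ℕ) (hn : 0 < n) (hp : 0 < p) (z : Fin n → ℂ)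
    (hz : ∀ i, z i ≠ 0) :
    ∑ k ∈ Finset.range (n + 1),
        (((2 * p - 1).choose p : ℂ) * (esym n z k) ^ 2 +
          ∑ j ∈ Finset.Icc 1 p,
            (-1 : ℂ) ^ j * ((2 * p).choose (p - j) : ℂ) *
              esym n z (k + j) * esymZ n z ((k : ℤ) - j)) =
      esym n z n *
        ∑ k ∈ Finset.range (n / 2 + 1),
          ((superCatalan p k / 2 : ℚ) : ℂ) *
            esym n (fun i => z i + (z i)⁻¹) (n - 2 * k) :=
  esym_Lkp_identity_general n p hp z hz
end

section
/- For fixed positive integers n and p, the polynomial identity ∑_{k=0}^{⌊n/2⌋} (S(p,k)/2) C(n,2k) z^k = C(2p-1,p) * ₂F₁(-n/2, (1-n)/2; p+1; 4z) holds, where ₂F₁ is the Gauss hypergeometric series (a terminating polynomial in z here) and S(p,k) = C(2p,p)C(2k,k)/C(p+k,p). -/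
/-- The Pochhammer symbol (ascending factorial) `(a)_k = a(a+1)⋯(a+k-1)`. -/
noncomputable def poch (a : ℝ) (k : ℕ) : ℝ := ∏ i ∈ Finset.range k, (a + i)

/-!
Both sides are compared term by term. By Legendre's duplication formula
`4^k (a)_k (a + 1/2)_k = (2a)_{2k}` with `a = -n/2`, the hypergeometric numerator times `4^k`
is `(-n)_{2k} = (2k)! C(n,2k)`. On the other side `C(p+k,p) = (p+1)_k / k!` and
`C(2p,p) = 2 C(2p-1,p)`, so `S(p,k)/2 = C(2p-1,p) (2k)! / ((p+1)_k k!)`.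
-/

open Nat

lemma poch_succ (a : ℝ) (k : ℕ) : poch a (k + 1) = poch a k * (a + k) :=
  Finset.prod_range_succ _ _

lemma four_pow_mul_poch_mul_poch_add_half (a : ℝ) (k : ℕ) :
    4 ^ k * (poch a k * poch (a + 1 / 2) k) = poch (2 * a) (2 * k) := by
  induction k with
  | zero => simp [poch]
  | succ k ih =>
    rw [show 2 * (k + 1) = 2 * k + 1 + 1 by ring, poch_succ, poch_succ, poch_succ, poch_succ]
    push_cast
    linear_combination (4 * (a + k) * (a + 1 / 2 + k)) * ih

lemma poch_neg_natCast (n m : ℕ) : poch (-n) m = (-1) ^ m * n.descFactorial m := by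
  induction m with
  | zero => simp [poch]
  | succ m ih =>
    rw [poch_succ, ih, descFactorial_succ]
    rcases le_or_gt m n with hmn | hnm
    · push_cast [Nat.cast_sub hmn]
      ring
    · simp [descFactorial_eq_zero_iff_lt.mpr hnm]

lemma poch_natCast_add_one_mul_factorial (p k : ℕ) :
    poch (p + 1) k * p ! = (p + k)! := by
  induction k with
  | zero => simp [poch]
  | succ k ih =>
    rw [poch_succ, ← add_assoc, factorial_succ]
    push_cast
    linear_combination (p + 1 + k : ℝ) * ih

lemma four_pow_mul_poch_neg_half_mul_poch (n k : ℕ) :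
    4 ^ k * (poch (-n / 2) k * poch ((1 - n) / 2) k) = (2 * k)! * n.choose (2 * k) := by
  rw [show (1 - n : ℝ) / 2 = -n / 2 + 1 / 2 by ring, four_pow_mul_poch_mul_poch_add_half,
    show 2 * (-n / 2 : ℝ) = -n by ring, poch_neg_natCast, pow_mul,
    descFactorial_eq_factorial_mul_choose]
  norm_num

lemma cast_add_choose_eq_poch_div_factorial (p k : ℕ) :
    ((p + k).choose p : ℝ) = poch (p + 1) k / k ! := by
  rw [cast_add_choose, ← poch_natCast_add_one_mul_factorial]
  field_simp

lemma choose_two_mul_self_eq_two_mul {p : ℕ} (hp : 0 < p) :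
    (2 * p).choose p = 2 * (2 * p - 1).choose p := by
  obtain ⟨q, rfl⟩ := exists_add_one_eq.mpr hp
  rw [show 2 * (q + 1) = 2 * q + 1 + 1 by ring, show 2 * q + 1 + 1 - 1 = 2 * q + 1 by rfl,
    choose_succ_succ, choose_symm_half]
  ring

lemma superCatalan_div_two {p : ℕ} (hp : 0 < p) (k : ℕ) :
    ((superCatalan p k / 2 : ℚ) : ℝ) =
      (2 * p - 1).choose p * (2 * k)! / (poch (p + 1) k * k !) := by
  have hcentral : ((2 * k).choose k : ℝ) = (2 * k)! / (k ! * k !) := by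
    rw [two_mul, cast_add_choose]
  rw [superCatalan]
  push_cast
  rw [choose_two_mul_self_eq_two_mul hp, hcentral, cast_add_choose_eq_poch_div_factorial]
  push_cast
  field_simp

theorem Qnp_eq_hypergeometric_general (n p : ℕ) (hp : 0 < p) (z : ℝ) :
    ∑ k ∈ Finset.range (n / 2 + 1),
        ((superCatalan p k / 2 : ℚ) : ℝ) * ((n.choose (2 * k) : ℝ)) * z ^ k =
      ((2 * p - 1).choose p : ℝ) *
        ∑ k ∈ Finset.range (n / 2 + 1),
          poch (-(n : ℝ) / 2) k * poch ((1 - (n : ℝ)) / 2) k /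
            (poch ((p : ℝ) + 1) k * (k.factorial : ℝ)) * (4 * z) ^ k := by
  rw [Finset.mul_sum]
  refine Finset.sum_congr rfl fun k _ => ?_
  rw [superCatalan_div_two hp, mul_pow]
  linear_combination ((2 * p - 1).choose p * z ^ k / (poch (p + 1) k * k !) : ℝ) *
    (four_pow_mul_poch_neg_half_mul_poch n k).symm

/-- `∑_{k=0}^{⌊n/2⌋} (S(p,k)/2) C(n,2k) z^k = C(2p-1,p) · ₂F₁(-n/2, (1-n)/2; p+1; 4z)`,
where the (terminating) Gauss hypergeometric series is written out explicitly. -/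
theorem Qnp_eq_hypergeometric (n p : ℕ) (hn : 0 < n) (hp : 0 < p) (z : ℝ) :
    ∑ k ∈ Finset.range (n / 2 + 1),
        ((superCatalan p k / 2 : ℚ) : ℝ) * ((n.choose (2 * k) : ℝ)) * z ^ k =
      ((2 * p - 1).choose p : ℝ) *
        ∑ k ∈ Finset.range (n / 2 + 1),
          poch (-(n : ℝ) / 2) k * poch ((1 - (n : ℝ)) / 2) k /
            (poch ((p : ℝ) + 1) k * (k.factorial : ℝ)) * (4 * z) ^ k :=
  Qnp_eq_hypergeometric_general n p hp z
end
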